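/- If v*(x,t) = E_{q_t(·,·|x)}[(X1 - x)/(1-t)] and u*(x,t) = E_{q_t(·,·|x)}[(x - X0)/t], where q_t(x|x0,x1) is the Gaussian density N(t·x1+(1-t)·x0, t(1-t)σ²I), then (v*(x,t) - u*(x,t))/σ² = ∇_x log q_t(x). -/
import Mathlib


open Real MeasureTheory

/-- Gaussian density on `ℝ^d` with mean `m` and covariance `v • I`. -/
noncomputable def gauss (d : ℕ) (m : EuclideanSpace ℝ (Fin d)) (v : ℝ)
    (x : EuclideanSpace ℝ (Fin d)) : ℝ :=
  (2 * π * v) ^ (-(d : ℝ) / 2) * Real.exp (-‖x - m‖ ^ 2 / (2 * v))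

lemma gauss_hasGradientAt (d : ℕ) (m : EuclideanSpace ℝ (Fin d)) (v : ℝ) (hv : v ≠ 0)
    (x : EuclideanSpace ℝ (Fin d)) :
    HasGradientAt (gauss d m v) ((gauss d m v x / v) • (m - x)) x := by
  rw [hasGradientAt_iff_hasFDerivAt]
  have h1 : HasFDerivAt (fun y : EuclideanSpace ℝ (Fin d) => ‖y - m‖ ^ 2)
      ((2 : ℕ) • (innerSL ℝ (x - m))) x := by
    simpa using ((hasFDerivAt_id x).sub_const m).norm_sq
  have h2 := (h1.const_mul (-(2*v)⁻¹)).exp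
  have h4 := h2.const_mul ((2 * π * v) ^ (-(d : ℝ) / 2))
  have heq : gauss d m v = fun y =>
      (2 * π * v) ^ (-(d : ℝ) / 2) * Real.exp (-(2*v)⁻¹ * ‖y - m‖ ^ 2) := by
    funext y
    simp only [gauss]
    ring_nf
  rw [heq]
  refine h4.congr_fderiv ?_
  ext y
  have harg : -(2*v)⁻¹ * ‖x - m‖ ^ 2 = -‖x - m‖ ^ 2 / (2 * v) := by ring
  simp only [InnerProductSpace.toDual_apply_apply, ContinuousLinearMap.smul_apply,
    ContinuousLinearMap.coe_smul', Pi.smul_apply, smul_eq_mul, nsmul_eq_mul,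
    real_inner_smul_left, inner_sub_left, innerSL_apply_apply, harg, gauss]
  field_simp
  ring

/-- With `v*(x,t) = E_{q_t(·,·|x)}[(X1-x)/(1-t)]` and `u*(x,t) = E_{q_t(·,·|x)}[(x-X0)/t]`
for the Gaussian bridge conditional `q_t(x|x0,x1) = N(t·x1+(1-t)·x0, t(1-t)σ²I)`, one has
`(v*(x,t) - u*(x,t))/σ² = ∇ₓ log q_t(x)`. -/
theorem vector_fields_difference_eq_score
    (d : ℕ) (σ : ℝ) (hσ : 0 < σ) (t : ℝ) (ht : t ∈ Set.Ioo (0 : ℝ) 1)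
    (qjoint : EuclideanSpace ℝ (Fin d) × EuclideanSpace ℝ (Fin d) → ℝ)
    (qcond : EuclideanSpace ℝ (Fin d) →
      EuclideanSpace ℝ (Fin d) × EuclideanSpace ℝ (Fin d) → ℝ)
    (hqcond : ∀ y p, qcond y p = gauss d (t • p.2 + (1 - t) • p.1) (t * (1 - t) * σ ^ 2) y)
    (qt : EuclideanSpace ℝ (Fin d) → ℝ)
    (hqt : ∀ y, qt y = ∫ p, qcond y p * qjoint p)
    (hjpos : ∀ p, 0 < qjoint p)
    (hqtpos : ∀ y, 0 < qt y)
    (x : EuclideanSpace ℝ (Fin d))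
    (hqtdiff : DifferentiableAt ℝ qt x)
    -- regularity: differentiation under the integral sign is valid
    (hswap : gradient qt x = ∫ p, qjoint p • gradient (fun y => qcond y p) x)
    (hint : Integrable (fun p => qjoint p • gradient (fun y => qcond y p) x))
    (hint1 : Integrable (fun p =>
      (qcond x p * qjoint p / qt x) • ((1 - t)⁻¹ • (p.2 - x))))
    (hint0 : Integrable (fun p =>
      (qcond x p * qjoint p / qt x) • (t⁻¹ • (x - p.1)))) :
    (σ ^ 2)⁻¹ •
        ((∫ p, (qcond x p * qjoint p / qt x) • ((1 - t)⁻¹ • (p.2 - x)))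
          - ∫ p, (qcond x p * qjoint p / qt x) • (t⁻¹ • (x - p.1)))
      = gradient (fun y => Real.log (qt y)) x := by
  obtain ⟨ht0, ht1⟩ := ht
  have ht1' : (0:ℝ) < 1 - t := by linarith
  have hv : t * (1 - t) * σ ^ 2 ≠ 0 := by positivity
  have hqtne : qt x ≠ 0 := (hqtpos x).ne'
  have hgrad : ∀ p, gradient (fun y => qcond y p) x
      = (qcond x p / (t * (1 - t) * σ ^ 2)) • ((t • p.2 + (1 - t) • p.1) - x) := by
    intro p
    have hfn : (fun y => qcond y p) = gauss d (t • p.2 + (1 - t) • p.1) (t * (1 - t) * σ ^ 2) := by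
      funext y; exact hqcond y p
    rw [hfn, hqcond]
    exact (gauss_hasGradientAt d _ _ hv x).gradient
  have hlog : gradient (fun y => Real.log (qt y)) x = (qt x)⁻¹ • gradient qt x := by
    have h2 := (Real.hasDerivAt_log hqtne).comp_hasFDerivAt x hqtdiff.hasFDerivAt
    have h3 : HasGradientAt (fun y => Real.log (qt y)) ((qt x)⁻¹ • gradient qt x) x := by
      rw [hasGradientAt_iff_hasFDerivAt]
      refine h2.congr_fderiv ?_
      rw [_root_.map_smul, gradient, LinearIsometryEquiv.apply_symm_apply]
    exact h3.gradient
  rw [hlog, hswap, ← integral_sub hint1 hint0, ← integral_smul, ← integral_smul]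
  congr 1
  funext p
  rw [hgrad p]
  match_scalars <;> field_simp <;> ring
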